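/- arXiv:1103.0444 — 2 statements merged into one kernel-verified Lean document; each statement's English description precedes it below -/
import Mathlib

section
/- Let d ≥ 2 and k ≥ 2d be integers with gcd(k,d) = 1, and let v and t be integers with 1 ≤ v ≤ d−1, t ≥ 0 and kv = 1 + td. Set θ = (v/d − 1/(kd))·2π. Then for every integer j with 1 ≤ j ≤ d−1, sin((j/2 − d)θ) and sin(jθ/2) have the same (nonzero) sign; in particular sin((j/2 − d)θ) / sin(jθ/2) ≥ 0. -/
open Real Polynomial Finset

noncomputable section

/-- The circular complete graph `K_{k/d}`: vertices `0,…,k-1`, with `i ~ j` iff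
`d ≤ |i-j| ≤ k-d`. -/
def circularCompleteGraph (k d : ℕ) : SimpleGraph (Fin k) where
  Adj i j := i ≠ j ∧ (d : ℤ) ≤ |((i : ℕ) : ℤ) - ((j : ℕ) : ℤ)| ∧
      |((i : ℕ) : ℤ) - ((j : ℕ) : ℤ)| ≤ (k : ℤ) - d
  symm := by
    constructor
    rintro i j ⟨hne, h1, h2⟩
    exact ⟨hne.symm, by rwa [abs_sub_comm], by rwa [abs_sub_comm]⟩
  loopless := by constructor; rintro i ⟨h, -, -⟩; exact h rfl

/-- The Lovász theta number of a finite graph, as the maximum of `∑_{x,y} B x y` over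
symmetric positive semidefinite matrices `B` with trace `1` vanishing on edges. -/
def lovaszTheta {V : Type*} [Fintype V] (G : SimpleGraph V) : ℝ :=
  sSup {r : ℝ | ∃ B : Matrix V V ℝ, B.PosSemidef ∧ (∑ x, B x x) = 1 ∧
    (∀ x y, G.Adj x y → B x y = 0) ∧ r = ∑ x, ∑ y, B x y}

/-!
From `kv = 1 + td` we get `θ = 2πt/k`, so `jθ/2 = π·jt/k` and
`(j/2 - d)θ ≡ π(jt + 2)/k (mod 2π)`. Since `td ≡ -1 (mod k)`, multiplying by `d` turns
`k ∣ jt + i` into `k ∣ id - j`, impossible for `i = 0, 1, 2` because `0 < |id - j| < k`.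
Hence no multiple of `k` lies in `[jt, jt + 2]`, so both angles lie in one interval
`(mπ, (m + 1)π)`, on which `sin` has constant sign.
-/

theorem Real.sin_mul_sin_pos_of_mem_Ioo {x y : ℝ} (m : ℤ)
    (hx : x ∈ Set.Ioo (m * π) ((m + 1) * π))
    (hy : y ∈ Set.Ioo (m * π) ((m + 1) * π)) : 0 < sin x * sin y := by
  have shifted_pos : ∀ z ∈ Set.Ioo (m * π) ((m + 1) * π), 0 < sin (z - m * π) := fun z hz =>
    sin_pos_of_pos_of_lt_pi (by linarith [hz.1]) (by linarith [hz.2])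
  calc 0 < ((-1) ^ m * (-1) ^ m) * (sin (x - m * π) * sin (y - m * π)) := by
        rw [← mul_zpow, neg_one_mul, neg_neg, one_zpow, one_mul]
        exact mul_pos (shifted_pos x hx) (shifted_pos y hy)
    _ = sin x * sin y := by
        rw [mul_mul_mul_comm, ← sin_add_int_mul_pi, ← sin_add_int_mul_pi, sub_add_cancel,
          sub_add_cancel]

theorem Real.pi_mul_div_mem_Ioo {m n k : ℤ} (hk : 0 < k) (hlo : m * k < n)
    (hhi : n < (m + 1) * k) :
    π * n / k ∈ Set.Ioo (m * π) ((m + 1) * π) := by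
  have hk' : (0 : ℝ) < k := by exact_mod_cast hk
  constructor
  · rw [lt_div_iff₀ hk', mul_right_comm, mul_comm π]
    exact mul_lt_mul_of_pos_right (by exact_mod_cast hlo) pi_pos
  · rw [div_lt_iff₀ hk', mul_right_comm, mul_comm π]
    exact mul_lt_mul_of_pos_right (by exact_mod_cast hhi) pi_pos

theorem Real.sin_pi_mul_div_mul_sin_pi_mul_add_two_div_pos {n k : ℤ} (hk : 0 < k)
    (h0 : ¬ k ∣ n) (h1 : ¬ k ∣ n + 1) (h2 : ¬ k ∣ n + 2) :
    0 < sin (π * n / k) * sin (π * ↑(n + 2) / k) := by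
  set q := n / k
  have hlo : q * k ≤ n := Int.ediv_mul_le n hk.ne'
  have hhi : n < (q + 1) * k := Int.lt_ediv_add_one_mul_self n hk
  have hne0 : q * k ≠ n := fun h => h0 ⟨q, by rw [← h, mul_comm]⟩
  have hne1 : (q + 1) * k ≠ n + 1 := fun h => h1 ⟨q + 1, by rw [← h, mul_comm]⟩
  have hne2 : (q + 1) * k ≠ n + 2 := fun h => h2 ⟨q + 1, by rw [← h, mul_comm]⟩
  exact sin_mul_sin_pos_of_mem_Ioo q (pi_mul_div_mem_Ioo hk (by omega) hhi)
    (pi_mul_div_mem_Ioo hk (by omega) (by omega))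

theorem Int.not_dvd_mul_add_of_mul_eq_one_add {k v t d : ℤ} (hvt : k * v = 1 + t * d) {i j : ℤ}
    (hne : i * d - j ≠ 0) (hlt : |i * d - j| < k) : ¬ k ∣ j * t + i := by
  intro hdvd
  have key : i * d - j = d * (j * t + i) - j * (k * v) := by rw [hvt]; ring
  refine hne (Int.eq_zero_of_abs_lt_dvd ?_ hlt)
  rw [key]
  exact (hdvd.mul_left d).sub ((dvd_mul_right k v).mul_left j)

theorem sin_same_sign_general (k d v t : ℕ) (hk : 2 * d ≤ k)
    (hvt : k * v = 1 + t * d)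
    (θ : ℝ) (hθ : θ = ((v : ℝ) / d - 1 / (k * d)) * (2 * Real.pi)) :
    ∀ j : ℕ, 1 ≤ j → j ≤ d - 1 →
      0 < Real.sin (((j : ℝ) / 2 - d) * θ) * Real.sin (j * θ / 2) ∧
      0 ≤ Real.sin (((j : ℝ) / 2 - d) * θ) / Real.sin (j * θ / 2) := by
  intro j hj1 hj2
  have hvtZ : (k : ℤ) * v = 1 + t * d := by exact_mod_cast hvt
  have hvtR : (k : ℝ) * v = 1 + t * d := by exact_mod_cast hvt
  have hkR : (k : ℝ) ≠ 0 := by norm_cast; omega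
  have hθ' : θ = 2 * π * t / k := by
    have hdR : (d : ℝ) ≠ 0 := by norm_cast; omega
    rw [hθ]; field_simp; linear_combination hvtR
  have hsin₁ : Real.sin (j * θ / 2) = Real.sin (π * ((j * t : ℤ) : ℝ) / k) := by
    rw [hθ']; push_cast; ring_nf
  have hsin₂ :
      Real.sin (((j : ℝ) / 2 - d) * θ) = Real.sin (π * ((j * t + 2 : ℤ) : ℝ) / k) := by
    rw [← Real.sin_add_int_mul_two_pi _ (v : ℤ), hθ']
    congr 1
    push_cast
    field_simp
    linear_combination 2 * hvtR
  have hprod : 0 < Real.sin (((j : ℝ) / 2 - d) * θ) * Real.sin (j * θ / 2) := by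
    rw [hsin₁, hsin₂, mul_comm]
    have not_dvd (i : ℤ) (hne : i * d - j ≠ 0) (hlt : |i * d - (j : ℤ)| < k) :
        ¬ (k : ℤ) ∣ j * t + i :=
      Int.not_dvd_mul_add_of_mul_eq_one_add hvtZ hne hlt
    exact Real.sin_pi_mul_div_mul_sin_pi_mul_add_two_div_pos (by omega)
      (not_dvd 0 (by omega) (by rw [abs_lt]; omega))
      (not_dvd 1 (by omega) (by rw [abs_lt]; omega))
      (not_dvd 2 (by omega) (by rw [abs_lt]; omega))
  exact ⟨hprod, (div_pos_iff.mpr (mul_pos_iff.mp hprod)).le⟩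

/-- Sign lemma: for `θ = (v/d − 1/(kd))·2π`, the numbers `sin((j/2 − d)θ)` and
`sin(jθ/2)` have the same nonzero sign, for `1 ≤ j ≤ d−1`. -/
theorem sin_same_sign (k d v t : ℕ) (hd : 2 ≤ d) (hk : 2 * d ≤ k)
    (hcop : Nat.Coprime k d) (hv1 : 1 ≤ v) (hv2 : v ≤ d - 1)
    (hvt : k * v = 1 + t * d)
    (θ : ℝ) (hθ : θ = ((v : ℝ) / d - 1 / (k * d)) * (2 * Real.pi)) :
    ∀ j : ℕ, 1 ≤ j → j ≤ d - 1 →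
      0 < Real.sin (((j : ℝ) / 2 - d) * θ) * Real.sin (j * θ / 2) ∧
      0 ≤ Real.sin (((j : ℝ) / 2 - d) * θ) / Real.sin (j * θ / 2) :=
  sin_same_sign_general k d v t hk hvt θ hθ
end
end

section
/- For all integers k ≥ 2d ≥ 2, the Lovász theta number of the complement of the circular complete graph satisfies ϑ(complement of K_{k/d}) ≤ k/d. -/
open Real Polynomial Finset

noncomputable section

/-!
The `k` windows `{t, t + 1, …, t + d - 1}` (mod `k`) are cliques of the complement of `K_{k/d}`,
and every vertex lies in exactly `d` of them. For a feasible matrix `B` with quadratic form `Q`,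
`Q` at the indicator of a clique is the trace of `B` on that clique, so these values add up to
`d` over all windows; the indicators themselves add up to `d • 1`, where `Q` equals `d² ∑ B`.
Convexity of `Q`, in the form `Q (∑ₜ vₜ) ≤ m ∑ₜ Q vₜ` for `m` vectors, gives `d² ∑ B ≤ k d`.
-/

open Matrix

theorem Matrix.PosSemidef.dotProduct_mulVec_sum_le {ι n : Type*} [Fintype ι] [Fintype n]
    {B : Matrix n n ℝ} (hB : B.PosSemidef) (v : ι → n → ℝ) :
    (∑ t, v t) ⬝ᵥ B *ᵥ ∑ t, v t ≤ Fintype.card ι * ∑ t, v t ⬝ᵥ B *ᵥ v t := by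
  have hnonneg : 0 ≤ ∑ s, ∑ t, (v s - v t) ⬝ᵥ B *ᵥ (v s - v t) :=
    sum_nonneg fun s _ => sum_nonneg fun t _ => by
      simpa using hB.dotProduct_mulVec_nonneg (v s - v t)
  have hexpand : ∑ s, ∑ t, (v s - v t) ⬝ᵥ B *ᵥ (v s - v t) =
      2 * (Fintype.card ι * ∑ t, v t ⬝ᵥ B *ᵥ v t) - 2 * ((∑ t, v t) ⬝ᵥ B *ᵥ ∑ t, v t) := by
    simp only [mulVec_sub, sub_dotProduct, dotProduct_sub, sum_sub_distrib, mulVec_sum,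
      sum_dotProduct, dotProduct_sum, sum_const, card_univ, nsmul_eq_mul]
    rw [sum_comm (f := fun s t => v t ⬝ᵥ B *ᵥ v s), ← mul_sum]
    ring
  linarith

theorem SimpleGraph.IsClique.dotProduct_mulVec_indicator {V : Type*} [Fintype V]
    {G : SimpleGraph V} {B : Matrix V V ℝ} (hB : ∀ x y, G.Adj x y → B x y = 0)
    {C : Finset V} (hC : G.IsClique (C : Set V)) :
    (C : Set V).indicator 1 ⬝ᵥ B *ᵥ (C : Set V).indicator 1 = ∑ i ∈ C, B i i := by
  classical
  have hrow : ∀ i ∈ C, ∑ j ∈ C, B i j = B i i := fun i hi =>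
    sum_eq_single_of_mem i hi fun j hj hji => hB i j (hC hi hj hji.symm)
  simp only [dotProduct, mulVec, Set.indicator_apply, mem_coe, Pi.one_apply, ite_mul, one_mul,
    zero_mul, mul_ite, mul_one, mul_zero, sum_ite_mem, univ_inter]
  exact sum_congr rfl hrow

theorem lovaszTheta_le_of_isClique_cover {V ι : Type*} [Fintype V] [Fintype ι] [DecidableEq V]
    (G : SimpleGraph V) (C : ι → Finset V) (hC : ∀ t, G.IsClique (C t : Set V)) {d : ℕ}
    (hd : 0 < d) (hcover : ∀ v, #{t | v ∈ C t} = d) :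
    lovaszTheta G ≤ Fintype.card ι / d := by
  refine Real.sSup_le ?_ (by positivity)
  rintro _ ⟨B, hB, htrace, hB0, rfl⟩
  set w : ι → V → ℝ := fun t => (C t : Set V).indicator 1
  have hw : ∑ t, w t = fun _ => (d : ℝ) := by
    ext v
    simp only [w, Finset.sum_apply, Set.indicator_apply, mem_coe, Pi.one_apply, sum_boole,
      hcover]
  have hquad_sum : (∑ t, w t) ⬝ᵥ B *ᵥ ∑ t, w t = (d : ℝ) ^ 2 * ∑ x, ∑ y, B x y := by
    simp only [hw, dotProduct, mulVec, mul_sum]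
    exact sum_congr rfl fun x _ => sum_congr rfl fun y _ => by ring
  have hsum_quad : ∑ t, w t ⬝ᵥ B *ᵥ w t = d := by
    simp only [w, (hC _).dotProduct_mulVec_indicator hB0]
    rw [sum_comm' (t' := univ) (s' := fun x => {t | x ∈ C t}) (by simp)]
    simp only [sum_const, hcover, nsmul_eq_mul, ← mul_sum, htrace, mul_one]
  have hconvex := hB.dotProduct_mulVec_sum_le w
  rw [hquad_sum, hsum_quad] at hconvex
  have hd' : (0 : ℝ) < d := by exact_mod_cast hd
  rw [le_div_iff₀ hd']
  nlinarith

def circularWindow (k d : ℕ) (t : Fin k) : Finset (Fin k) := {i | ((i - t : Fin k) : ℕ) < d}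

theorem isClique_compl_circularWindow (k d : ℕ) (t : Fin k) :
    (circularCompleteGraph k d)ᶜ.IsClique (circularWindow k d t : Set (Fin k)) := by
  intro i hi j hj hij
  simp only [circularWindow, coe_filter, mem_univ, true_and, Set.mem_ofPred_eq] at hi hj
  refine (SimpleGraph.compl_adj _ _ _).2 ⟨hij, ?_⟩
  rintro ⟨-, hlo, hhi⟩
  have hsub : ∀ a : Fin k, ((a - t : Fin k) : ℕ) = a - t ∧ (t : ℕ) ≤ a ∨
      ((a - t : Fin k) : ℕ) = k + a - t ∧ (a : ℕ) < t := fun a =>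
    (le_or_gt t a).imp (fun h => ⟨Fin.coe_sub_iff_le.2 h, h⟩)
      (fun h => ⟨Fin.coe_sub_iff_lt.2 h, h⟩)
  have hik := i.isLt
  have hjk := j.isLt
  rw [le_abs] at hlo
  rw [abs_le] at hhi
  -- Either `|i - j| < d`, or the window wraps around `0` and `|i - j| > k - d`.
  rcases hsub i with ⟨hi', hit⟩ | ⟨hi', hit⟩ <;>
    rcases hsub j with ⟨hj', hjt⟩ | ⟨hj', hjt⟩ <;> omega

theorem card_filter_mem_circularWindow {k d : ℕ} [NeZero k] (hdk : d ≤ k) (i : Fin k) :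
    #{t | i ∈ circularWindow k d t} = d := by
  have hshift : #{t : Fin k | i ∈ circularWindow k d t} = #{u : Fin k | (u : ℕ) < d} :=
    card_nbij' (i - ·) (i - ·) (fun _ h => by simpa [circularWindow] using h)
      (fun _ h => by simpa [circularWindow] using h)
      (fun _ _ => sub_sub_cancel _ _) (fun _ _ => sub_sub_cancel _ _)
  rw [hshift, Fin.card_filter_val_lt, min_eq_right hdk]

/-- Upper bound: `ϑ(complement of K_{k/d}) ≤ k/d`. -/
theorem theta_circular_upper_bound (k d : ℕ) (hd : 1 ≤ d) (hk : 2 * d ≤ k) :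
    lovaszTheta (circularCompleteGraph k d)ᶜ ≤ (k : ℝ) / d := by
  have : NeZero k := ⟨by omega⟩
  simpa using lovaszTheta_le_of_isClique_cover _ (circularWindow k d)
    (isClique_compl_circularWindow k d) hd (card_filter_mem_circularWindow (by omega))
end
end
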